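/- arXiv:1509.08996 — 2 statements merged into one kernel-verified Lean document; each statement's English description precedes it below -/
import Mathlib

section
/- Let p(λ, μ) = det(L(λ) - μ·Id) where L(λ) = ∑_{i=0}^d L_i λ^i has all coefficients L_i skew-Hermitian (L_iᴴ = -L_i). Then the spectral curve is invariant under the antiholomorphic involution τ(λ, μ) = (conj(λ), -conj(μ)); precisely, conj(p(conj(λ), -conj(μ))) = (-1)^n p(λ, μ) for all (λ, μ) ∈ ℂ², so p(λ, μ) = 0 if and only if p(conj(λ), -conj(μ)) = 0. -/
open Matrix

/-- The characteristic polynomial `p(λ, μ) = det(L(λ) - μ·Id)` of a matrix polynomial with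
skew-Hermitian coefficients. -/
noncomputable def specPolySkew {n d : ℕ} (L : Fin (d + 1) → Matrix (Fin n) (Fin n) ℂ)
    (lam mu : ℂ) : ℂ :=
  ((∑ i : Fin (d + 1), (lam ^ (i : ℕ)) • L i) - mu • 1).det

/-- For a matrix polynomial with skew-Hermitian coefficients, the spectral curve is
invariant under `τ(λ, μ) = (conj λ, -conj μ)`:
`conj(p(conj λ, -conj μ)) = (-1)^n p(λ, μ)`, hence `p(λ, μ) = 0 ↔ p(conj λ, -conj μ) = 0`. -/
theorem spectral_curve_invariant_compact_form {n d : ℕ}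
    (L : Fin (d + 1) → Matrix (Fin n) (Fin n) ℂ)
    (hL : ∀ i, (L i)ᴴ = -(L i)) :
    ∀ lam mu : ℂ,
      (starRingEnd ℂ)
          (specPolySkew L ((starRingEnd ℂ) lam) (-(starRingEnd ℂ) mu))
        = (-1 : ℂ) ^ n * specPolySkew L lam mu ∧
      (specPolySkew L lam mu = 0 ↔
        specPolySkew L ((starRingEnd ℂ) lam) (-(starRingEnd ℂ) mu) = 0) := by
  intro lam mu
  have key : (starRingEnd ℂ)
      (specPolySkew L ((starRingEnd ℂ) lam) (-(starRingEnd ℂ) mu))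
      = (-1 : ℂ) ^ n * specPolySkew L lam mu := by
    unfold specPolySkew
    set M := (∑ i : Fin (d + 1), (lam ^ (i : ℕ)) • L i) - mu • (1 : Matrix (Fin n) (Fin n) ℂ)
    set A := (∑ i : Fin (d + 1), (((starRingEnd ℂ) lam) ^ (i : ℕ)) • L i)
      - (-(starRingEnd ℂ) mu) • (1 : Matrix (Fin n) (Fin n) ℂ)
    have hA : Aᴴ = -M := by
      simp only [A, M, conjTranspose_sub, conjTranspose_smul, conjTranspose_sum,
        conjTranspose_one, hL, map_neg, map_pow, RingHomCompTriple.comp_apply,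
        RingHom.id_apply, starRingEnd_self_apply, neg_sub]
      simp only [star_pow, star_neg, Complex.star_def, Complex.conj_conj, smul_neg,
        Finset.sum_neg_distrib, neg_smul, neg_neg]
      abel
    calc (starRingEnd ℂ) A.det = star A.det := rfl
      _ = Aᴴ.det := (Matrix.det_conjTranspose A).symm
      _ = (-M).det := by rw [hA]
      _ = (-1 : ℂ) ^ n * M.det := by simp [Matrix.det_neg]
  refine ⟨key, ?_⟩
  constructor
  · intro h
    have := key
    rw [h, mul_zero] at this
    exact (starRingEnd ℂ).injective (by simpa using this)
  · intro h
    have := key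
    rw [h, map_zero] at this
    have hpow : ((-1 : ℂ) ^ n) ≠ 0 := by
      simp [pow_ne_zero]
    exact (mul_eq_zero.mp this.symm).resolve_left hpow
end

section
/- Let L(λ) = ∑_{i=0}^d L_i λ^i be a matrix polynomial with L_d = J diagonal with distinct diagonal entries, and let Y(λ) = ∑_{i=1}^{d} Y_i λ^{-i} be a matrix Laurent polynomial (Y_i ∈ Mat(n, ℂ)). Suppose [L(λ), Y(λ)]_+ = 0, where [·,·]_+ denotes the part of the commutator with nonnegative powers of λ, and suppose all Y_i are diagonal-free (zero diagonal entries). Then Y = 0. -/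
open Matrix Finset

/-- If `L(λ) = ∑_{i=0}^d L_i λ^i` has diagonal leading coefficient `J = diag(j)` with
distinct entries, `Y(λ) = ∑_{i=1}^d Y_i λ^{-i}` has all coefficients diagonal-free, and the
nonnegative part `[L, Y]_+` of the commutator vanishes (i.e. the coefficient of `λ^k`
vanishes for every `k ≥ 0`), then `Y = 0`. -/
theorem diagonal_free_kernel_trivial {n d : ℕ} (hd : 1 ≤ d)
    (j : Fin n → ℂ) (hj : Function.Injective j)
    (Lc : ℕ → Matrix (Fin n) (Fin n) ℂ)
    (hLd : Lc d = Matrix.diagonal j)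
    (Yc : ℕ → Matrix (Fin n) (Fin n) ℂ)
    (hYsupp : ∀ m : ℕ, (m = 0 ∨ d < m) → Yc m = 0)
    (hYdiag : ∀ (m : ℕ) (i : Fin n), Yc m i i = 0)
    (hcomm : ∀ k : ℕ,
      ∑ i ∈ Finset.range (d + 1), ∑ m ∈ Finset.Icc 1 d,
        (if i = k + m then Lc i * Yc m - Yc m * Lc i else 0) = 0) :
    ∀ m : ℕ, Yc m = 0 := by
  intro m
  induction m using Nat.strong_induction_on with
  | _ m IH =>
    rcases Nat.eq_zero_or_pos m with hm0 | hm1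
    · exact hYsupp m (Or.inl hm0)
    rcases le_or_gt m d with hmd | hmd
    swap
    · exact hYsupp m (Or.inr hmd)
    have hk := hcomm (d - m)
    have hsimp : ∑ i ∈ Finset.range (d + 1), ∑ m' ∈ Finset.Icc 1 d,
        (if i = (d - m) + m' then Lc i * Yc m' - Yc m' * Lc i else 0) =
        Lc d * Yc m - Yc m * Lc d := by
      have hre : ∀ i ∈ Finset.range (d + 1), ∀ m' ∈ Finset.Icc 1 d,
          (if i = (d - m) + m' then Lc i * Yc m' - Yc m' * Lc i else 0) =
          (if m' = m ∧ i = d then Lc d * Yc m - Yc m * Lc d else 0) := by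
        intro i hi m' hm'
        simp only [Finset.mem_range] at hi
        simp only [Finset.mem_Icc] at hm'
        by_cases h : i = (d - m) + m'
        · rcases lt_trichotomy m' m with h1 | h1 | h1
          · rw [IH m' h1]
            have hne : m' ≠ m := by omega
            simp [h, hne]
          · subst h1
            have hid : d - m' + m' = d := by omega
            simp [h, hid]
          · omega
        · have : ¬ (m' = m ∧ i = d) := by rintro ⟨rfl, rfl⟩; omega
          simp [h, this]
      rw [Finset.sum_congr rfl (fun i hi => Finset.sum_congr rfl (hre i hi))]
      rw [Finset.sum_comm]
      rw [Finset.sum_eq_single m]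
      · rw [Finset.sum_eq_single d] <;> intros <;> simp_all
      · intro b _ hb; apply Finset.sum_eq_zero; intro i _; simp [hb]
      · intro h; exact absurd (Finset.mem_Icc.mpr ⟨hm1, hmd⟩) h
    rw [hsimp] at hk
    have hk' : Lc d * Yc m = Yc m * Lc d := by
      have := sub_eq_zero.mp hk; exact this
    ext a b
    rcases eq_or_ne a b with rfl | hab
    · simp [hYdiag]
    · have := congrFun (congrFun hk' a) b
      rw [hLd] at this
      rw [Matrix.diagonal_mul, Matrix.mul_diagonal] at this
      have hja : j a ≠ j b := fun h => hab (hj h)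
      have : (j a - j b) * Yc m a b = 0 := by ring_nf; linear_combination this
      rcases mul_eq_zero.mp this with h | h
      · exact absurd (sub_eq_zero.mp h) hja
      · simp [h]
end
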